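/- Let I ⊂ K[x,y] be a convex monomial ideal of height 2. Then I^k is convex for all integers k ≥ 1. -/

import Mathlib

open MvPolynomial

open Pointwise in
theorem ConvexAux.spanPow {R : Type} [CommRing R] (s : Set R) (k : ℕ) :
    Ideal.span s ^ k = Ideal.span (s ^ k) := by
  induction k with
  | zero =>
      rw [pow_zero, pow_zero, Ideal.one_eq_top]
      rw [show (1 : Set R) = {1} from rfl, Ideal.span_singleton_one]
  | succ n ih => rw [pow_succ, pow_succ, ih, Ideal.span_mul_span']

/-- Increments of a convex sequence are monotone. -/
theorem ConvexAux.dmono (m : ℕ) (g : ℕ → ℤ)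
    (hg : ∀ i, 2 ≤ i → i + 1 ≤ m → 2 * g i ≤ g (i - 1) + g (i + 1)) :
    ∀ r s, 1 ≤ r → r ≤ s → s + 1 ≤ m → g (r + 1) - g r ≤ g (s + 1) - g s := by
  intro r s hr hrs
  induction s, hrs using Nat.le_induction with
  | base => intro _; exact le_refl _
  | succ s hs ih =>
      intro hsm
      have h1 := hg (s + 1) (by omega) (by omega)
      have h2 := ih (by omega)
      simp only [Nat.add_sub_cancel] at h1
      linarith

/-- Supporting line at `i` for a convex sequence. -/
theorem ConvexAux.supportLine (m : ℕ) (g : ℕ → ℤ)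
    (hg : ∀ i, 2 ≤ i → i + 1 ≤ m → 2 * g i ≤ g (i - 1) + g (i + 1))
    (i : ℕ) (hi1 : 1 ≤ i) (him : i + 1 ≤ m) :
    ∀ j, 1 ≤ j → j ≤ m → g i + ((j : ℤ) - (i : ℤ)) * (g (i + 1) - g i) ≤ g j := by
  have up : ∀ j, i ≤ j → j ≤ m → g i + ((j : ℤ) - (i : ℤ)) * (g (i + 1) - g i) ≤ g j := by
    intro j hij
    induction j, hij using Nat.le_induction with
    | base => intro _; simp
    | succ j hj ih =>
        intro hjm
        have h1 := ih (by omega)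
        have h2 := ConvexAux.dmono m g hg i j hi1 hj hjm
        push_cast
        push_cast at h1
        linarith
  have down : ∀ c j, j + c = i → 1 ≤ j → g i + ((j : ℤ) - (i : ℤ)) * (g (i + 1) - g i) ≤ g j := by
    intro c
    induction c with
    | zero => intro j hj _; simp [show j = i by omega]
    | succ c ih =>
        intro j hj hj1
        have h1 := ih (j + 1) (by omega) (by omega)
        have h2 := ConvexAux.dmono m g hg j i hj1 (by omega) him
        push_cast at h1 ⊢
        linarith
  intro j hj1 hjm
  rcases le_total i j with h | h
  · exact up j h hjm
  · exact down (i - j) j (by omega) hj1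

theorem ConvexAux.sumLB (m k : ℕ) (g : ℕ → ℤ)
    (hg : ∀ i, 2 ≤ i → i + 1 ≤ m → 2 * g i ≤ g (i - 1) + g (i + 1))
    (f : Fin k → ℕ) (hf : ∀ l, 1 ≤ f l ∧ f l ≤ m)
    (i t : ℕ) (hi1 : 1 ≤ i) (him : i + 1 ≤ m) (hS : ∑ l, f l = k * i + t) :
    (k : ℤ) * g i + (t : ℤ) * (g (i + 1) - g i) ≤ ∑ l, g (f l) := by
  have key : ∀ l : Fin k, g i + ((f l : ℤ) - (i : ℤ)) * (g (i + 1) - g i) ≤ g (f l) :=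
    fun l => ConvexAux.supportLine m g hg i hi1 him (f l) (hf l).1 (hf l).2
  have h1 : ∑ l : Fin k, (g i + ((f l : ℤ) - (i : ℤ)) * (g (i + 1) - g i)) ≤ ∑ l, g (f l) :=
    Finset.sum_le_sum (fun l _ => key l)
  have h2 : ∑ l : Fin k, (g i + ((f l : ℤ) - (i : ℤ)) * (g (i + 1) - g i))
      = (k : ℤ) * g i + (t : ℤ) * (g (i + 1) - g i) := by
    rw [Finset.sum_add_distrib, Finset.sum_const, ← Finset.sum_mul, Finset.sum_sub_distrib,
      Finset.sum_const]
    have hs : ∑ l : Fin k, ((f l : ℤ)) = ((k * i + t : ℕ) : ℤ) := by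
      rw [← hS]; push_cast; rfl
    simp only [Finset.card_univ, Fintype.card_fin, nsmul_eq_mul] at *
    push_cast at hs ⊢
    rw [hs]; ring
  linarith

theorem ConvexAux.core (m k : ℕ) (hm : 2 ≤ m) (hk : 1 ≤ k) (a b : ℕ → ℕ)
    (hconv : ∀ i, 2 ≤ i → i + 1 ≤ m →
      2 * a i ≤ a (i - 1) + a (i + 1) ∧ 2 * b i ≤ b (i - 1) + b (i + 1))
    (f : Fin k → ℕ) (hf : ∀ l, 1 ≤ f l ∧ f l ≤ m) :
    ∃ i t, 1 ≤ i ∧ i + 1 ≤ m ∧ t ≤ k ∧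
      (k - t) * a i + t * a (i + 1) ≤ ∑ l, a (f l) ∧
      (k - t) * b i + t * b (i + 1) ≤ ∑ l, b (f l) := by
  set S := ∑ l, f l with hSdef
  have hSk : k ≤ S := by
    calc k = ∑ _l : Fin k, 1 := by simp
    _ ≤ S := Finset.sum_le_sum (fun l _ => (hf l).1)
  have hSm : S ≤ k * m := by
    calc S ≤ ∑ _l : Fin k, m := Finset.sum_le_sum (fun l _ => (hf l).2)
    _ = k * m := by simp [mul_comm]
  set i := min (S / k) (m - 1) with hi
  set t := S - k * i with ht
  have hdk : k * (S / k) ≤ S := Nat.mul_div_le S k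
  have hdk1 : 1 ≤ S / k := Nat.one_le_div_iff (by omega) |>.2 hSk
  have hki : k * i ≤ S := le_trans (Nat.mul_le_mul_left k (min_le_left _ _)) hdk
  have hi1 : 1 ≤ i := by omega
  have him : i + 1 ≤ m := by omega
  have htk : t ≤ k := by
    rcases le_or_gt (S / k) (m - 1) with h | h
    · have hieq : i = S / k := by omega
      have h1 : k * i = k * (S / k) := by rw [hieq]
      have hmod : S % k < k := Nat.mod_lt _ (by omega)
      have := Nat.div_add_mod S k
      omega
    · have hie : i = m - 1 := by omega
      have h1 : k * i = k * (m - 1) := by rw [hie]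
      have h2 : k * (m - 1) + k = k * m := by
        rw [← Nat.mul_succ]; congr 1; omega
      have h3 : S / k ≥ m := by omega
      have h4 : k * m ≤ k * (S / k) := Nat.mul_le_mul_left _ h3
      omega
  have hS : S = k * i + t := by omega
  refine ⟨i, t, hi1, him, htk, ?_, ?_⟩
  · have h := ConvexAux.sumLB m k (fun j => (a j : ℤ)) (fun j h2 hj => by
      have := (hconv j h2 hj).1; push_cast; omega) f hf i t hi1 him hS
    have hcast : ((∑ l, a (f l) : ℕ) : ℤ) = ∑ l, ((a (f l)) : ℤ) := by push_cast; rfl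
    have : (((k - t) * a i + t * a (i + 1) : ℕ) : ℤ) ≤ ((∑ l, a (f l) : ℕ) : ℤ) := by
      rw [hcast]
      have hsub : ((k - t : ℕ) : ℤ) = (k : ℤ) - t := by omega
      push_cast [hsub]
      linarith
    exact_mod_cast this
  · have h := ConvexAux.sumLB m k (fun j => (b j : ℤ)) (fun j h2 hj => by
      have := (hconv j h2 hj).2; push_cast; omega) f hf i t hi1 him hS
    have hcast : ((∑ l, b (f l) : ℕ) : ℤ) = ∑ l, ((b (f l)) : ℤ) := by push_cast; rfl
    have : (((k - t) * b i + t * b (i + 1) : ℕ) : ℤ) ≤ ((∑ l, b (f l) : ℕ) : ℤ) := by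
      rw [hcast]
      have hsub : ((k - t : ℕ) : ℤ) = (k : ℤ) - t := by omega
      push_cast [hsub]
      linarith
    exact_mod_cast this

/-- The interpolated exponent sequence for the power of a convex ideal. -/
def ConvexAux.interp (k : ℕ) (u : ℕ → ℕ) (j : ℕ) : ℕ :=
  (k - (j - 1) % k) * u ((j - 1) / k + 1) + ((j - 1) % k) * u ((j - 1) / k + 2)

/-- Step identity for the interpolated exponent sequence. -/
theorem ConvexAux.stepF (k : ℕ) (hk : 1 ≤ k) (u : ℕ → ℕ) (p : ℕ) :
    (k - (p+1) % k) * u ((p+1)/k + 1) + ((p+1) % k) * u ((p+1)/k + 2) + u (p/k + 1)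
      = (k - p % k) * u (p/k + 1) + (p % k) * u (p/k + 2) + u (p/k + 2) := by
  obtain ⟨q, r, hr, hp⟩ : ∃ q r, r < k ∧ p = k * q + r :=
    ⟨p / k, p % k, Nat.mod_lt _ (by omega), (Nat.div_add_mod p k).symm⟩
  subst hp
  have hdiv : (k * q + r) / k = q := by
    rw [Nat.mul_add_div (by omega)]; simp [Nat.div_eq_of_lt hr]
  have hmod : (k * q + r) % k = r := by rw [Nat.mul_add_mod]; exact Nat.mod_eq_of_lt hr
  rcases lt_or_eq_of_le (Nat.succ_le_of_lt hr) with h | h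
  · have hdiv1 : (k * q + r + 1) / k = q := by
      rw [add_assoc, Nat.mul_add_div (by omega)]; simp [Nat.div_eq_of_lt h]
    have hmod1 : (k * q + r + 1) % k = r + 1 := by
      rw [add_assoc, Nat.mul_add_mod]; exact Nat.mod_eq_of_lt h
    rw [hdiv, hmod, hdiv1, hmod1]
    have h1 : r + 1 ≤ k := le_of_lt h
    zify [h1, le_of_lt hr]
    ring
  · have hpk : k * q + r + 1 = k * (q + 1) := by rw [Nat.mul_succ]; omega
    have hdiv1 : (k * q + r + 1) / k = q + 1 := by
      rw [hpk, Nat.mul_div_cancel_left _ (by omega)]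
    have hmod1 : (k * q + r + 1) % k = 0 := by
      rw [hpk, Nat.mul_mod_right]
    rw [hdiv, hmod, hdiv1, hmod1]
    simp only [Nat.sub_zero, Nat.zero_mul, Nat.add_zero]
    zify [le_of_lt hr]
    have : (r : ℤ) = k - 1 := by omega
    rw [this]
    ring

theorem ConvexAux.interp_step (k : ℕ) (hk : 1 ≤ k) (u : ℕ → ℕ) (j : ℕ) (hj : 1 ≤ j) :
    ConvexAux.interp k u (j + 1) + u ((j - 1) / k + 1)
      = ConvexAux.interp k u j + u ((j - 1) / k + 2) := by
  have h := ConvexAux.stepF k hk u (j - 1)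
  have hj1 : j - 1 + 1 = j := by omega
  rw [hj1] at h
  unfold ConvexAux.interp
  rw [show j + 1 - 1 = j from rfl]
  exact h

/-- Nat version of increment monotonicity. -/
theorem ConvexAux.natPair (m : ℕ) (u : ℕ → ℕ)
    (hu : ∀ i, 2 ≤ i → i + 1 ≤ m → 2 * u i ≤ u (i - 1) + u (i + 1))
    (r s : ℕ) (hr : 1 ≤ r) (hrs : r ≤ s) (hsm : s + 1 ≤ m) :
    u (r + 1) + u s ≤ u r + u (s + 1) := by
  have h := ConvexAux.dmono m (fun i => (u i : ℤ)) (fun i h2 hi => by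
      have := hu i h2 hi; push_cast; omega) r s hr hrs hsm
  omega

open Pointwise in
theorem ConvexAux.repPow {R : Type} [CommRing R] (m : ℕ) (u : ℕ → R) :
    ∀ k (z : R), z ∈ ((fun i => u i) '' Set.Icc 1 m) ^ k →
      ∃ f : Fin k → ℕ, (∀ l, 1 ≤ f l ∧ f l ≤ m) ∧ z = ∏ l, u (f l) := by
  intro k
  induction k with
  | zero =>
      intro z hz
      rw [pow_zero] at hz
      refine ⟨fun l => l.elim0, fun l => l.elim0, ?_⟩
      simpa using hz
  | succ n ih =>
      intro z hz
      rw [pow_succ] at hz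
      rcases Set.mem_mul.1 hz with ⟨p, hp, q, hq, hpq⟩
      rcases ih p hp with ⟨f, hf, hfp⟩
      rcases hq with ⟨i, hi, rfl⟩
      rw [Set.mem_Icc] at hi
      refine ⟨Fin.cons i f, ?_, ?_⟩
      · intro l
        refine Fin.cases ?_ ?_ l
        · exact hi
        · intro j; exact hf j
      · rw [Fin.prod_univ_succ]
        simp only [Fin.cons_zero, Fin.cons_succ]
        rw [← hpq, hfp, mul_comm]

theorem ConvexAux.mono_prod {R : Type} [CommRing R] (x y : R) (k : ℕ) (av bv : Fin k → ℕ) :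
    ∏ l, (x ^ av l * y ^ bv l) = x ^ (∑ l, av l) * y ^ (∑ l, bv l) := by
  rw [Finset.prod_mul_distrib, Finset.prod_pow_eq_pow_sum, Finset.prod_pow_eq_pow_sum]

theorem ConvexAux.mono_split {R : Type} [CommRing R] (x y : R) (p q A1 B1 A2 B2 : ℕ) :
    x ^ (p * A1 + q * A2) * y ^ (p * B1 + q * B2) = (x ^ A1 * y ^ B1) ^ p * (x ^ A2 * y ^ B2) ^ q := by
  rw [pow_add, pow_add, mul_pow, mul_pow, ← pow_mul, ← pow_mul, ← pow_mul, ← pow_mul]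
  ring

theorem ConvexAux.mono_factor {R : Type} [CommRing R] (x y : R) (A B c d : ℕ)
    (h1 : c ≤ A) (h2 : d ≤ B) :
    x ^ A * y ^ B = (x ^ (A - c) * y ^ (B - d)) * (x ^ c * y ^ d) := by
  conv_lhs => rw [show A = A - c + c by omega, show B = B - d + d by omega]
  rw [pow_add, pow_add]
  ring

open Pointwise in
theorem ConvexAux.pow_mul_pow_mem {R : Type} [CommRing R] (s : Set R) (u v : R)
    (hu : u ∈ s) (hv : v ∈ s) (p q : ℕ) : u ^ p * v ^ q ∈ s ^ (p + q) := by
  rw [pow_add]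
  exact Set.mul_mem_mul (Set.pow_mem_pow hu) (Set.pow_mem_pow hv)

/-- A (height-two) monomial ideal `J ⊆ K[x,y]` is *convex* if its minimal monomial
generating set, ordered lexicographically, is `u i = x^(α i) * y^(β i)`, `i = 1, …, n`,
with `α` strictly decreasing, `β` strictly increasing, `α n = β 1 = 0`, and the
exponent vectors `c i = (α i, β i)` satisfy `2 • c i ≤ c (i-1) + c (i+1)`
componentwise for all `i = 2, …, n-1`. -/
def IsConvexIdeal (K : Type) [Field K] (J : Ideal (MvPolynomial (Fin 2) K)) : Prop :=
  ∃ (n : ℕ) (α β : ℕ → ℕ), 1 ≤ n ∧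
    (∀ i, 1 ≤ i → i + 1 ≤ n → α (i + 1) < α i ∧ β i < β (i + 1)) ∧
    α n = 0 ∧ β 1 = 0 ∧
    J = Ideal.span ((fun i => X 0 ^ α i * X 1 ^ β i) '' Set.Icc 1 n) ∧
    (∀ i, 2 ≤ i → i + 1 ≤ n →
      2 * α i ≤ α (i - 1) + α (i + 1) ∧ 2 * β i ≤ β (i - 1) + β (i + 1))

/-- **Proposition 2.8.** Let `I ⊆ K[x,y]` be a convex monomial ideal of height 2.
Then `I^k` is convex for all integers `k ≥ 1`. -/
theorem stmt_8 (K : Type) [Field K] (m : ℕ) (hm : 2 ≤ m) (a b : ℕ → ℕ)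
    (hmono : ∀ i, 1 ≤ i → i + 1 ≤ m → a (i + 1) < a i ∧ b i < b (i + 1))
    (ham : a m = 0) (hb1 : b 1 = 0)
    (hconv : ∀ i, 2 ≤ i → i + 1 ≤ m →
      2 * a i ≤ a (i - 1) + a (i + 1) ∧ 2 * b i ≤ b (i - 1) + b (i + 1))
    (I : Ideal (MvPolynomial (Fin 2) K))
    (hI : I = Ideal.span ((fun i => X 0 ^ a i * X 1 ^ b i) '' Set.Icc 1 m)) :
    ∀ k, 1 ≤ k → IsConvexIdeal K (I ^ k) := by
  intro k hk
  subst hI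
  have hk0 : 0 < k := hk
  have hdivlt : ∀ j, 1 ≤ j → j + 1 ≤ k * (m - 1) + 1 → (j - 1) / k + 2 ≤ m := by
    intro j hj0 hj
    have hc : (m - 1) * k = k * (m - 1) := mul_comm _ _
    have h1 : j - 1 < (m - 1) * k := by omega
    have h2 : (j - 1) / k < m - 1 := (Nat.div_lt_iff_lt_mul hk0).2 h1
    omega
  have hdivle : ∀ j, j ≤ k * (m - 1) + 1 → (j - 1) / k + 1 ≤ m := by
    intro j hj
    have h1 : (j - 1) / k ≤ (k * (m - 1)) / k := Nat.div_le_div_right (by omega)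
    rw [Nat.mul_div_cancel_left _ hk0] at h1
    omega
  refine ⟨k * (m - 1) + 1, ConvexAux.interp k a, ConvexAux.interp k b, by omega, ?_, ?_, ?_, ?_, ?_⟩
  · -- strict monotonicity
    intro j hj1 hjn
    have him := hdivlt j hj1 hjn
    have hstepA := ConvexAux.interp_step k hk a j hj1
    have hstepB := ConvexAux.interp_step k hk b j hj1
    have hm1 := hmono ((j - 1) / k + 1) (Nat.le_add_left 1 _) (by omega)
    have e1 : (j - 1) / k + 1 + 1 = (j - 1) / k + 2 := by omega
    rw [e1] at hm1
    exact ⟨by omega, by omega⟩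
  · -- α n = 0
    unfold ConvexAux.interp
    rw [Nat.add_sub_cancel, Nat.mul_mod_right, Nat.mul_div_cancel_left _ hk0,
      show m - 1 + 1 = m by omega, ham]
    simp
  · -- β 1 = 0
    unfold ConvexAux.interp
    norm_num [hb1]
  · -- span equality
    rw [ConvexAux.spanPow]
    apply le_antisymm
    · rw [Ideal.span_le]
      intro z hz
      obtain ⟨f, hf, rfl⟩ := ConvexAux.repPow m (fun i => X 0 ^ a i * X 1 ^ b i) k z hz
      rw [ConvexAux.mono_prod]
      obtain ⟨i, t, hi1, him, htk, hLA, hLB⟩ := ConvexAux.core m k hm hk a b hconv f hf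
      have hj : ∃ j, 1 ≤ j ∧ j ≤ k * (m - 1) + 1 ∧
          ConvexAux.interp k a j = (k - t) * a i + t * a (i + 1) ∧
          ConvexAux.interp k b j = (k - t) * b i + t * b (i + 1) := by
        rcases eq_or_lt_of_le htk with heq | htlt
        · refine ⟨i * k + 1, by omega, ?_, ?_, ?_⟩
          · have h1 : i * k ≤ (m - 1) * k := Nat.mul_le_mul_right _ (by omega)
            have h2 : (m - 1) * k = k * (m - 1) := mul_comm _ _
            omega
          all_goals
            rw [heq]
            unfold ConvexAux.interp
            rw [Nat.add_sub_cancel, Nat.mul_div_cancel _ hk0, Nat.mul_mod_left,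
              Nat.sub_zero, Nat.sub_self]
            ring
        · refine ⟨(i - 1) * k + t + 1, by omega, ?_, ?_, ?_⟩
          · have h1 : (i - 1) * k ≤ (m - 2) * k := Nat.mul_le_mul_right _ (by omega)
            have h2 : (m - 2) * k + k = (m - 2 + 1) * k := (Nat.succ_mul _ _).symm
            have h3 : (m - 2 + 1) * k = k * (m - 1) := by rw [show m - 2 + 1 = m - 1 by omega, mul_comm]
            omega
          all_goals
            unfold ConvexAux.interp
            rw [Nat.add_sub_cancel, show (i - 1) * k + t = k * (i - 1) + t from by ring,
              Nat.mul_add_div hk0, Nat.mul_add_mod, Nat.div_eq_of_lt htlt,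
              Nat.mod_eq_of_lt htlt, Nat.add_zero,
              show i - 1 + 1 = i by omega, show i - 1 + 2 = i + 1 by omega]
      obtain ⟨j, hj1, hjn, hEA, hEB⟩ := hj
      rw [ConvexAux.mono_factor (X 0) (X 1) (∑ l, a (f l)) (∑ l, b (f l))
        (ConvexAux.interp k a j) (ConvexAux.interp k b j)
        (by rw [hEA]; exact hLA) (by rw [hEB]; exact hLB)]
      exact Ideal.mul_mem_left _ _ (Ideal.subset_span ⟨j, Set.mem_Icc.2 ⟨hj1, hjn⟩, rfl⟩)
    · rw [Ideal.span_le]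
      rintro z ⟨j, hj, rfl⟩
      rw [Set.mem_Icc] at hj
      apply Ideal.subset_span
      simp only [ConvexAux.interp]
      rw [ConvexAux.mono_split]
      have hmem1 : (X 0 ^ a ((j - 1) / k + 1) * X 1 ^ b ((j - 1) / k + 1) : MvPolynomial (Fin 2) K)
          ∈ ((fun i => X 0 ^ a i * X 1 ^ b i) '' Set.Icc 1 m) :=
        ⟨(j - 1) / k + 1, Set.mem_Icc.2 ⟨Nat.le_add_left 1 _, hdivle j hj.2⟩, rfl⟩
      by_cases ht0 : (j - 1) % k = 0
      · rw [ht0, Nat.sub_zero, pow_zero, mul_one]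
        exact Set.pow_mem_pow hmem1
      · have hne : j - 1 ≠ k * (m - 1) := by
          intro hE
          rw [hE, Nat.mul_mod_right] at ht0
          exact ht0 rfl
        have him2 : (j - 1) / k + 2 ≤ m := hdivlt j (by omega) (by omega)
        have hmem2 : (X 0 ^ a ((j - 1) / k + 2) * X 1 ^ b ((j - 1) / k + 2) : MvPolynomial (Fin 2) K)
            ∈ ((fun i => X 0 ^ a i * X 1 ^ b i) '' Set.Icc 1 m) :=
          ⟨(j - 1) / k + 2, Set.mem_Icc.2 ⟨Nat.succ_le_succ (Nat.zero_le _), him2⟩, rfl⟩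
        have hmem := ConvexAux.pow_mul_pow_mem _ _ _ hmem1 hmem2 (k - (j - 1) % k) ((j - 1) % k)
        have hmod : (j - 1) % k < k := Nat.mod_lt _ hk0
        rwa [Nat.sub_add_cancel hmod.le] at hmem
  · -- convexity
    intro j hj2 hjn
    have him := hdivlt j (by omega) hjn
    have hstepA1 := ConvexAux.interp_step k hk a (j - 1) (by omega)
    have hstepB1 := ConvexAux.interp_step k hk b (j - 1) (by omega)
    rw [show j - 1 + 1 = j by omega, show j - 1 - 1 = j - 2 by omega] at hstepA1 hstepB1
    have hstepA2 := ConvexAux.interp_step k hk a j (by omega)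
    have hstepB2 := ConvexAux.interp_step k hk b j (by omega)
    have hrs : (j - 2) / k ≤ (j - 1) / k := Nat.div_le_div_right (by omega)
    have hpairA := ConvexAux.natPair m a (fun i h1 h2 => (hconv i h1 h2).1)
      ((j - 2) / k + 1) ((j - 1) / k + 1) (Nat.le_add_left 1 _) (by omega) (by omega)
    have hpairB := ConvexAux.natPair m b (fun i h1 h2 => (hconv i h1 h2).2)
      ((j - 2) / k + 1) ((j - 1) / k + 1) (Nat.le_add_left 1 _) (by omega) (by omega)
    rw [show (j - 2) / k + 1 + 1 = (j - 2) / k + 2 by omega,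
      show (j - 1) / k + 1 + 1 = (j - 1) / k + 2 by omega] at hpairA hpairB
    constructor <;> omega
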